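/- arXiv:1711.03260 — 2 statements merged into one kernel-verified Lean document; each statement's English description precedes it below -/
import Mathlib

section
/- Suppose Assumption (R) holds. Then for every n ≥ 1 and every i = 1,…,d, μ(Y_n ∩ A_i) = Σ_{k>n} μ(B_{i,k}); equivalently, w_i(n+1) − w_i(n) = Σ_{k>n} μ(B_{i,k}), and consequently for every s > 0, Q_i(s) = Σ_{n≥1} e^{−ns} Σ_{k>n} μ(B_{i,k}). -/
/-!
Since `T` preserves `μ`, `μ (Y_n ∩ A_i) = μ (T⁻¹ (Y_n ∩ A_i))`, and for `n ≥ 1` dynamical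
separation splits this preimage into the disjoint pieces `Y_{n+1} ∩ A_i` (its points outside `Y`)
and `B_{i,n+1}` (its points in `Y`). Iterating, `μ (Y_n ∩ A_i)` is the sum of `μ (B_{i,k})` over
`n < k ≤ n + m` plus `μ (Y_{n+m} ∩ A_i)`, and this remainder vanishes as `m → ∞`: the same preimage
argument gives `μ Y = μ Y_m + μ (Y ∩ {first return to Y is at most m})`, and by Poincaré
recurrence almost every point of `Y` returns. The statements on `w_i` and `Q_i` follow by
bookkeeping.
-/

open MeasureTheory Filter Topology Set
open scoped ENNReal

noncomputable section

/-- Occupation time vector: `S_n(x) i = ∑_{k=1}^n 1_{A i}(T^k x)`. -/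
def occVec {X : Type*} (T : X → X) {ι : Type*} (A : ι → Set X) (n : ℕ) (x : X) :
    ι → ℝ :=
  fun i => ∑ k ∈ Finset.range n, (A i).indicator (fun _ => (1 : ℝ)) (T^[k + 1] x)

/-- `Y_k = {x : ψ(x) = k}` where `ψ(x) = min{k ≥ 0 : T^k x ∈ Y}`. -/
def Yray {X : Type*} (T : X → X) (Y : Set X) (k : ℕ) : Set X :=
  {x | T^[k] x ∈ Y ∧ ∀ j < k, T^[j] x ∉ Y}

/-- `B_{i,k}`: points of `Y` which stay in `Ai` at times `1, …, k-1` and return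
to `Y` at time `k`. -/
def Bray {X : Type*} (T : X → X) (Y Ai : Set X) (k : ℕ) : Set X :=
  {x | x ∈ Y ∧ (∀ j, 0 < j → j < k → T^[j] x ∈ Ai) ∧ T^[k] x ∈ Y}

/-- Wandering rate of `Y` starting from `B`: `∑_{k<n} μ(Y_k ∩ B)`
(for `B = A i` this is `w_i(n)`, for `B = univ` it is `w(n)`). -/
def wrate {X : Type*} [MeasurableSpace X] (μ : Measure X) (T : X → X) (Y B : Set X)
    (n : ℕ) : ℝ≥0∞ :=
  ∑ k ∈ Finset.range n, μ (Yray T Y k ∩ B)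

/-- `Q_i(s) = ∑_{n ≥ 0} e^{-ns} μ(Y_n ∩ A_i)`, a finite real number for `s > 0`. -/
def Qlap {X : Type*} [MeasurableSpace X] (μ : Measure X) (T : X → X) (Y B : Set X)
    (s : ℝ) : ℝ :=
  ∑' n : ℕ, Real.exp (-(n : ℝ) * s) * (μ (Yray T Y n ∩ B)).toReal

/-- `Y` dynamically separates the rays `A i`. -/
def DynSep {X : Type*} (T : X → X) (Y : Set X) {d : ℕ} (A : Fin d → Set X) : Prop :=
  ∀ x n i j, i ≠ j → x ∈ A i → T^[n] x ∈ A j → ∃ k, 0 < k ∧ k < n ∧ T^[k] x ∈ Y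

/-- Assumption (R). -/
structure RaySetting {X : Type*} [MeasurableSpace X] (μ : Measure X) (T : X → X)
    {d : ℕ} (Y : Set X) (A : Fin d → Set X) : Prop where
  d2 : 2 ≤ d
  sigmaFinite : SigmaFinite μ
  infiniteTotal : μ Set.univ = ⊤
  conservative : Conservative T μ
  ergodic : Ergodic T μ
  measY : MeasurableSet Y
  measA : ∀ i, MeasurableSet (A i)
  disjA : Pairwise (Function.onFun Disjoint A)
  disjYA : ∀ i, Disjoint Y (A i)
  cover : Y ∪ (⋃ i, A i) = Set.univ
  posY : 0 < μ Y
  finY : μ Y < ⊤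
  infA : ∀ i, μ (A i) = ⊤
  sep : DynSep T Y A

/-- `h` is a version of `T̂^k 1_B`, the `k`-th power of the dual operator applied
to the indicator of `B`. -/
def IsDualPowIndicator {X : Type*} [MeasurableSpace X] (μ : Measure X) (T : X → X)
    (B : Set X) (k : ℕ) (h : X → ℝ) : Prop :=
  Measurable h ∧ (∀ x, 0 ≤ h x) ∧ Integrable h μ ∧
    ∀ g : X → ℝ, Measurable g → (∃ C, ∀ x, |g x| ≤ C) →
      ∫ x, h x * g x ∂μ = ∫ x in B, g (T^[k] x) ∂μ

/-- Assumption (C): `hT k i` is a version of `T̂^k 1_{Y_k ∩ A_i}` and, for each `i`,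
the collection `{ w_i(n)⁻¹ ∑_{k<n} T̂^k 1_{Y_k ∩ A_i} : n ≥ 1 }` is strongly
precompact in `L¹(μ)`. -/
def AssumptionC {X : Type*} [MeasurableSpace X] (μ : Measure X) (T : X → X)
    {d : ℕ} (Y : Set X) (A : Fin d → Set X) (hT : ℕ → Fin d → X → ℝ) : Prop :=
  (∀ k i, IsDualPowIndicator μ T (Yray T Y k ∩ A i) k (hT k i)) ∧
    ∀ i, IsCompact (closure
      {f : Lp ℝ 1 μ | ∃ n, 1 ≤ n ∧
        (f : X → ℝ) =ᵐ[μ]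
          fun x => ((wrate μ T Y (A i) n).toReal)⁻¹ *
            ∑ k ∈ Finset.range n, hT k i x})

/-- A positive function is regularly varying of index `ρ` at `∞`. -/
def RegVarAtTop (f : ℝ → ℝ) (ρ : ℝ) : Prop :=
  (∀ᶠ x in atTop, 0 < f x) ∧
    ∀ r > 0, Tendsto (fun x => f (r * x) / f x) atTop (𝓝 (r ^ ρ))

/-- A positive sequence is regularly varying of index `ρ` at `∞`. -/
def RegVarSeq (a : ℕ → ℝ) (ρ : ℝ) : Prop :=
  RegVarAtTop (fun x => a ⌊x⌋₊) ρ

/-- A positive function is regularly varying of index `ρ` at `0+`. -/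
def RegVarAtZero (f : ℝ → ℝ) (ρ : ℝ) : Prop :=
  (∀ᶠ x in 𝓝[>] (0 : ℝ), 0 < f x) ∧
    ∀ r > 0, Tendsto (fun x => f (r * x) / f x) (𝓝[>] (0 : ℝ)) (𝓝 (r ^ ρ))

/-- Weak convergence of the pushforwards of `F n` under `ν` to the law of `ζ`. -/
def WeakConvTo {X : Type*} [MeasurableSpace X] (ν : Measure X) {E : Type*}
    [TopologicalSpace E] (F : ℕ → X → E) {Ω : Type*} [MeasurableSpace Ω]
    (P : Measure Ω) (ζ : Ω → E) : Prop :=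
  ∀ f : BoundedContinuousFunction E ℝ,
    Tendsto (fun n => ∫ x, f (F n x) ∂ν) atTop (𝓝 (∫ ω, f (ζ ω) ∂P))

/-- `ζ` has the generalized arcsine law `ζ_{α,β}`, characterized via the double
Laplace transform. -/
def HasArcsineLaw {Ω : Type*} [MeasurableSpace Ω] (P : Measure Ω) {ι : Type*}
    [Fintype ι] (ζ : Ω → ι → ℝ) (α : ℝ) (β : ι → ℝ) : Prop :=
  ∀ q > (0 : ℝ), ∀ lam : ι → ℝ, (∀ i, 0 ≤ lam i) →
    ∫ u in Ioi (0 : ℝ), Real.exp (-q * u) *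
        (∫ ω, Real.exp (-u * ∑ i, lam i * ζ ω i) ∂P)
      = (∑ i, β i * (q + lam i) ^ (-(1 - α))) / (∑ i, β i * (q + lam i) ^ α)

/-- `S̃_{λ,n,t} = exp(−λ·S_n/t)`. -/
def Stilde {X : Type*} (T : X → X) {ι : Type*} [Fintype ι] (A : ι → Set X)
    (lam : ι → ℝ) (n : ℕ) (t : ℝ) (x : X) : ℝ :=
  Real.exp (-(∑ i, lam i * occVec T A n x i) / t)

/-! ### The interval-map setting -/

/-- The Thaler interval-map setting: `T : [0,1] → [0,1]` with indifferent fixed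
points `xp 1 < ⋯ < xp d`, branch intervals `(a (i-1), a i)`, `C²` branch
extensions `Text i` and `C²` extensions `finv i` of the branch inverses. -/
structure ThalerMap (d : ℕ) (a : ℕ → ℝ) (xp : ℕ → ℝ) (T : ℝ → ℝ)
    (Text : ℕ → ℝ → ℝ) (finv : ℕ → ℝ → ℝ) : Prop where
  d2 : 2 ≤ d
  a0 : a 0 = 0
  ad : a d = 1
  xp1 : xp 1 = 0
  xpd : xp d = 1
  lt_left : ∀ i, 2 ≤ i → i ≤ d → a (i - 1) < xp i
  lt_right : ∀ i, 1 ≤ i → i ≤ d - 1 → xp i < a i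
  mapsTo : Set.MapsTo T (Icc 0 1) (Icc 0 1)
  ext_smooth : ∀ i, 1 ≤ i → i ≤ d → ContDiff ℝ 2 (Text i)
  ext_eq : ∀ i, 1 ≤ i → i ≤ d → EqOn (Text i) T (Ioo (a (i - 1)) (a i))
  dense_image : ∀ i, 1 ≤ i → i ≤ d → Icc (0 : ℝ) 1 ⊆ closure (T '' Ioo (a (i - 1)) (a i))
  fixed : ∀ i, 1 ≤ i → i ≤ d → T (xp i) = xp i ∧ Text i (xp i) = xp i
  deriv_one : ∀ i, 1 ≤ i → i ≤ d → deriv (Text i) (xp i) = 1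
  second_deriv_pos : ∀ i, 1 ≤ i → i ≤ d → ∀ x ∈ Ioo (a (i - 1)) (a i), x ≠ xp i →
    0 < (x - xp i) * iteratedDeriv 2 (Text i) x
  inv_smooth : ∀ i, 1 ≤ i → i ≤ d → ContDiff ℝ 2 (finv i)
  inv_eq : ∀ i, 1 ≤ i → i ≤ d → ∀ x ∈ Ioo (a (i - 1)) (a i), finv i (T x) = x
  inv_maps : ∀ i, 1 ≤ i → i ≤ d → MapsTo (finv i) (Icc 0 1) (Icc (a (i - 1)) (a i))

/-- The density `h(x) = h₀(x) ∏_i (x - x_i)/(x - f_i(x))` of the invariant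
measure with respect to Lebesgue measure. -/
def thalerDensity (d : ℕ) (xp : ℕ → ℝ) (finv : ℕ → ℝ → ℝ) (h0 : ℝ → ℝ) (x : ℝ) : ℝ :=
  h0 x * ∏ i ∈ Finset.Icc 1 d, ((x - xp i) / (x - finv i x))

/-- The invariant measure `μ = h · Leb|_{[0,1]}`. -/
def thalerMeasure (d : ℕ) (xp : ℕ → ℝ) (finv : ℕ → ℝ → ℝ) (h0 : ℝ → ℝ) :
    Measure ℝ :=
  (volume.restrict (Icc 0 1)).withDensity
    (fun x => ENNReal.ofReal (thalerDensity d xp finv h0 x))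

/-- The index set of the rays `(i, ±)`: `+` for `1 ≤ i ≤ d-1`, `−` for `2 ≤ i ≤ d`
(`true` encodes `+`, `false` encodes `−`); it has `2d - 2` elements. -/
def RayIdx (d : ℕ) :=
  {p : Fin (d + 1) × Bool //
    (p.2 = true ∧ 1 ≤ (p.1 : ℕ) ∧ (p.1 : ℕ) ≤ d - 1) ∨
    (p.2 = false ∧ 2 ≤ (p.1 : ℕ) ∧ (p.1 : ℕ) ≤ d)}

instance (d : ℕ) : Fintype (RayIdx d) := by
  unfold RayIdx; infer_instance

/-- The index `i` of a ray. -/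
def rayNum {d : ℕ} (k : RayIdx d) : ℕ := (k.1.1 : ℕ)

/-- The ray `A_i^± = (x_i, x_i + ε)` resp. `(x_i − ε, x_i)`. -/
def raySet {d : ℕ} (xp : ℕ → ℝ) (ε : ℝ) (k : RayIdx d) : Set ℝ :=
  if k.1.2 then Ioo (xp (rayNum k)) (xp (rayNum k) + ε)
  else Ioo (xp (rayNum k) - ε) (xp (rayNum k))

/-- `v_i = ∑_{j ≠ i} h(f_j(x_i)) f_j'(x_i)`. -/
def rayV (d : ℕ) (xp : ℕ → ℝ) (finv : ℕ → ℝ → ℝ) (h0 : ℝ → ℝ) (i : ℕ) : ℝ :=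
  ∑ j ∈ (Finset.Icc 1 d).erase i,
    thalerDensity d xp finv h0 (finv j (xp i)) * deriv (finv j) (xp i)

/-- `β_i^± = (c_i^±)^{−α} v_i / ∑_{j,±} (c_j^±)^{−α} v_j`, with `∞^{−α} = 0`. -/
def rayBeta (d : ℕ) (xp : ℕ → ℝ) (finv : ℕ → ℝ → ℝ) (h0 : ℝ → ℝ) (α : ℝ)
    (c : RayIdx d → ℝ≥0∞) (k : RayIdx d) : ℝ :=
  ((c k ^ (-α)).toReal * rayV d xp finv h0 (rayNum k)) /
    ∑ j, ((c j ^ (-α)).toReal * rayV d xp finv h0 (rayNum j))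

/-- The asymptotic relation `|Tx − x| / Ψ(|x − x_i|) → c_i^±` as `x → x_i ± 0`
(the limit being `+∞` when `c_i^± = ∞`). -/
def RegTLimit {d : ℕ} (T : ℝ → ℝ) (xp : ℕ → ℝ) (Ψ : ℝ → ℝ) (k : RayIdx d)
    (cv : ℝ≥0∞) : Prop :=
  Tendsto (fun x => ENNReal.ofReal (|T x - x| / Ψ |x - xp (rayNum k)|))
    (if k.1.2 then 𝓝[>] (xp (rayNum k)) else 𝓝[<] (xp (rayNum k))) (𝓝 cv)

lemma ENNReal.eq_tsum_of_eq_add_of_tendsto_zero {a b : ℕ → ℝ≥0∞} {N : ℕ}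
    (h : ∀ n ≥ N, a n = b n + a (n + 1)) (ha : Tendsto a atTop (𝓝 0)) {n : ℕ} (hn : N ≤ n) :
    a n = ∑' j, b (n + j) := by
  have htelescope : ∀ m, a n = ∑ j ∈ Finset.range m, b (n + j) + a (n + m) := by
    intro m
    induction m with
    | zero => simp
    | succ m ih => rw [ih, h (n + m) (by omega), Finset.sum_range_succ, add_assoc, add_assoc]
  have hlim : Tendsto (fun m => ∑ j ∈ Finset.range m, b (n + j) + a (n + m)) atTop
      (𝓝 (∑' j, b (n + j) + 0)) :=
    (ENNReal.tendsto_nat_tsum _).add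
      (ha.comp ((tendsto_add_atTop_nat n).congr fun m => add_comm m n))
  rw [add_zero] at hlim
  exact tendsto_nhds_unique (tendsto_const_nhds.congr htelescope) hlim

section FirstEntrance

variable {X : Type*} {T : X → X} {Y : Set X}

@[simp]
lemma yray_zero : Yray T Y 0 = Y := by
  ext x; simp [Yray]

lemma mem_yray_succ_iff {n : ℕ} {x : X} :
    x ∈ Yray T Y (n + 1) ↔ x ∉ Y ∧ T x ∈ Yray T Y n := by
  simp only [Yray, mem_ofPred_eq, Function.iterate_succ_apply, Nat.forall_lt_succ_left,
    Function.iterate_zero_apply]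
  tauto

lemma notMem_of_mem_yray {n : ℕ} {x : X} (hn : 0 < n) (hx : x ∈ Yray T Y n) : x ∉ Y :=
  hx.2 0 hn

lemma pairwise_disjoint_yray : Pairwise (Function.onFun Disjoint (Yray T Y)) := by
  intro m n hmn
  rcases hmn.lt_or_gt with h | h
  · exact disjoint_left.2 fun x hm hn => hn.2 m h hm.1
  · exact disjoint_left.2 fun x hm hn => hm.2 n h hn.1

lemma preimage_yray (n : ℕ) :
    T ⁻¹' Yray T Y n = Yray T Y (n + 1) ∪ (Y ∩ T ⁻¹' Yray T Y n) := by
  ext x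
  by_cases hx : x ∈ Y <;> simp [mem_yray_succ_iff, hx]

lemma exists_mem_yray_of_iterate_mem {m : ℕ} {x : X} (h : T^[m] x ∈ Y) :
    ∃ n, x ∈ Yray T Y n := by
  classical
  have hex : ∃ n, T^[n] x ∈ Y := ⟨m, h⟩
  exact ⟨Nat.find hex, Nat.find_spec hex, fun j hj => Nat.find_min hex hj⟩

variable [MeasurableSpace X]

lemma measurableSet_yray (hT : Measurable T) (hY : MeasurableSet Y) (n : ℕ) :
    MeasurableSet (Yray T Y n) := by
  have h : Yray T Y n = T^[n] ⁻¹' Y ∩ ⋂ j < n, (T^[j] ⁻¹' Y)ᶜ := by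
    ext x; simp [Yray]
  rw [h]
  exact (hT.iterate n hY).inter (.biInter (to_countable _) fun j _ => (hT.iterate j hY).compl)

lemma measurableSet_bray (hT : Measurable T) (hY : MeasurableSet Y) {B : Set X}
    (hB : MeasurableSet B) (k : ℕ) : MeasurableSet (Bray T Y B k) := by
  have h : Bray T Y B k = Y ∩ (⋂ j ∈ Ioo 0 k, T^[j] ⁻¹' B) ∩ T^[k] ⁻¹' Y := by
    ext x
    simp only [Bray, mem_ofPred_eq, mem_inter_iff, mem_iInter, mem_preimage, mem_Ioo, and_imp,
      and_assoc]
  rw [h]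
  exact (hY.inter (.biInter (to_countable _) fun j _ => hT.iterate j hB)).inter (hT.iterate k hY)

end FirstEntrance

section ReturnTimes

variable {X : Type*} [MeasurableSpace X] {μ : Measure X} {T : X → X} {Y : Set X}

lemma MeasureTheory.MeasurePreserving.measure_yray_eq_add (hT : MeasurePreserving T μ μ)
    (hY : MeasurableSet Y) (n : ℕ) :
    μ (Yray T Y n) = μ (Yray T Y (n + 1)) + μ (Y ∩ T ⁻¹' Yray T Y n) := by
  have hn := measurableSet_yray hT.measurable hY n
  conv_lhs => rw [← hT.measure_preimage hn.nullMeasurableSet, preimage_yray n]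
  refine measure_union ?_ (hY.inter (hT.measurable hn))
  exact disjoint_left.2 fun x hx hx' => notMem_of_mem_yray n.succ_pos hx hx'.1

lemma MeasureTheory.MeasurePreserving.measure_eq_measure_yray_add_sum
    (hT : MeasurePreserving T μ μ) (hY : MeasurableSet Y) (n : ℕ) :
    μ Y = μ (Yray T Y n) + ∑ k ∈ Finset.range n, μ (Y ∩ T ⁻¹' Yray T Y k) := by
  induction n with
  | zero => simp
  | succ n ih =>
    rw [ih, hT.measure_yray_eq_add hY n, Finset.sum_range_succ]
    ring

lemma MeasureTheory.MeasurePreserving.measure_yray_le (hT : MeasurePreserving T μ μ)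
    (hY : MeasurableSet Y) (n : ℕ) : μ (Yray T Y n) ≤ μ Y := by
  rw [hT.measure_eq_measure_yray_add_sum hY n]
  exact le_self_add

lemma MeasureTheory.Conservative.tsum_measure_inter_preimage_yray (hc : Conservative T μ)
    (hY : MeasurableSet Y) : ∑' n, μ (Y ∩ T ⁻¹' Yray T Y n) = μ Y := by
  have hTm := hc.toQuasiMeasurePreserving.measurable
  rw [← measure_iUnion (fun m n hmn => ((pairwise_disjoint_yray hmn).preimage T).mono
      inter_subset_right inter_subset_right)
      fun n => hY.inter (hTm (measurableSet_yray hTm hY n))]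
  refine (measure_mono (iUnion_subset fun n => inter_subset_left)).antisymm ?_
  rw [← measure_sdiff_null (hc.measure_mem_forall_ge_image_notMem_eq_zero hY.nullMeasurableSet 1)]
  refine measure_mono fun x ⟨hxY, hret⟩ => ?_
  simp only [mem_ofPred_eq, not_and, not_forall, not_not] at hret
  obtain ⟨m, hm, hmY⟩ := hret hxY
  obtain ⟨n, hn⟩ := exists_mem_yray_of_iterate_mem (T := T) (x := T x) (m := m - 1)
    (by rwa [← Function.iterate_succ_apply, Nat.succ_eq_add_one, Nat.sub_add_cancel hm])
  exact mem_iUnion.2 ⟨n, hxY, hn⟩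

lemma tendsto_measure_yray_atTop_zero (hc : Conservative T μ) (hT : MeasurePreserving T μ μ)
    (hY : MeasurableSet Y) (hYfin : μ Y ≠ ∞) :
    Tendsto (fun n => μ (Yray T Y n)) atTop (𝓝 0) := by
  have hpartial : Tendsto (fun n => ∑ k ∈ Finset.range n, μ (Y ∩ T ⁻¹' Yray T Y k)) atTop
      (𝓝 (μ Y)) :=
    hc.tsum_measure_inter_preimage_yray hY ▸ ENNReal.tendsto_nat_tsum _
  have hsub := ENNReal.Tendsto.sub tendsto_const_nhds hpartial (Or.inl hYfin)
  rw [tsub_self] at hsub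
  refine hsub.congr fun n => (ENNReal.eq_sub_of_add_eq ?_ ?_).symm
  · refine ne_top_of_le_ne_top hYfin ?_
    rw [hT.measure_eq_measure_yray_add_sum hY n]
    exact le_add_self
  · exact (hT.measure_eq_measure_yray_add_sum hY n).symm

end ReturnTimes

section Rays

variable {X : Type*} {T : X → X} {Y : Set X} {d : ℕ} {A : Fin d → Set X}

lemma exists_mem_of_notMem (hcover : Y ∪ ⋃ j, A j = univ) {x : X} (hx : x ∉ Y) :
    ∃ j, x ∈ A j := by
  have hx' : x ∈ Y ∪ ⋃ j, A j := hcover ▸ mem_univ x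
  simpa [hx] using hx'

lemma DynSep.eq_of_mem_of_apply_mem (hsep : DynSep T Y A) {i j : Fin d} {x : X}
    (hx : x ∈ A i) (hTx : T x ∈ A j) : i = j := by
  by_contra hij
  obtain ⟨k, hk0, hk1, -⟩ := hsep x 1 i j hij hx hTx
  omega

lemma DynSep.apply_mem (hsep : DynSep T Y A) (hcover : Y ∪ ⋃ j, A j = univ) {i : Fin d}
    {x : X} (hx : x ∈ A i) (hTx : T x ∉ Y) : T x ∈ A i := by
  obtain ⟨j, hj⟩ := exists_mem_of_notMem hcover hTx
  rwa [hsep.eq_of_mem_of_apply_mem hx hj]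

lemma DynSep.iterate_mem (hsep : DynSep T Y A) (hcover : Y ∪ ⋃ j, A j = univ) {i : Fin d}
    {x : X} (hx : x ∈ A i) {m : ℕ} (hm : ∀ k < m, T^[k] x ∉ Y) : ∀ k < m, T^[k] x ∈ A i := by
  intro k hk
  induction k with
  | zero => exact hx
  | succ k ih =>
    rw [Function.iterate_succ_apply']
    refine hsep.apply_mem hcover (ih (by omega)) ?_
    simpa only [Function.iterate_succ_apply'] using hm _ hk

lemma DynSep.preimage_yray_inter (hsep : DynSep T Y A) (hcover : Y ∪ ⋃ j, A j = univ)
    (hdisj : ∀ j, Disjoint Y (A j)) (i : Fin d) {n : ℕ} (hn : 0 < n) :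
    T ⁻¹' (Yray T Y n ∩ A i) = Yray T Y (n + 1) ∩ A i ∪ Bray T Y (A i) (n + 1) := by
  ext x
  simp only [mem_preimage, mem_inter_iff, mem_union, mem_yray_succ_iff]
  constructor
  · rintro ⟨hTx, hTxA⟩
    by_cases hxY : x ∈ Y
    · refine .inr ⟨hxY, fun j hj0 hj => ?_,
        by simpa only [Function.iterate_succ_apply] using hTx.1⟩
      obtain ⟨j, rfl⟩ := Nat.exists_eq_add_one_of_ne_zero hj0.ne'
      rw [Function.iterate_succ_apply]
      exact hsep.iterate_mem hcover hTxA hTx.2 j (by omega)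
    · obtain ⟨j, hj⟩ := exists_mem_of_notMem hcover hxY
      exact .inl ⟨⟨hxY, hTx⟩, hsep.eq_of_mem_of_apply_mem hj hTxA ▸ hj⟩
  · rintro (⟨⟨hxY, hTx⟩, hxA⟩ | ⟨hxY, hmid, hret⟩)
    · exact ⟨hTx, hsep.apply_mem hcover hxA (notMem_of_mem_yray hn hTx)⟩
    · refine ⟨⟨by simpa only [Function.iterate_succ_apply] using hret, fun j hj => ?_⟩,
        hmid 1 one_pos (by omega)⟩
      rw [← Function.iterate_succ_apply]
      exact disjoint_left.1 (hdisj i).symm (hmid (j + 1) j.succ_pos (by omega))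

end Rays

section RayMeasures

variable {X : Type*} [MeasurableSpace X] {μ : Measure X} {T : X → X} {Y : Set X} {d : ℕ}
  {A : Fin d → Set X}

lemma measure_yray_inter_eq_bray_add (hT : MeasurePreserving T μ μ) (hY : MeasurableSet Y)
    (hA : ∀ j, MeasurableSet (A j)) (hsep : DynSep T Y A) (hcover : Y ∪ ⋃ j, A j = univ)
    (hdisj : ∀ j, Disjoint Y (A j)) (i : Fin d) {n : ℕ} (hn : 0 < n) :
    μ (Yray T Y n ∩ A i) = μ (Bray T Y (A i) (n + 1)) + μ (Yray T Y (n + 1) ∩ A i) := by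
  have hmeas := (measurableSet_yray hT.measurable hY n).inter (hA i)
  rw [← hT.measure_preimage hmeas.nullMeasurableSet, hsep.preimage_yray_inter hcover hdisj i hn,
    measure_union _ (measurableSet_bray hT.measurable hY (hA i) _), add_comm]
  exact disjoint_left.2 fun x hx hx' => notMem_of_mem_yray n.succ_pos hx.1 hx'.1

lemma measure_yray_inter_eq_tsum_bray (hc : Conservative T μ) (hT : MeasurePreserving T μ μ)
    (hY : MeasurableSet Y) (hYfin : μ Y ≠ ∞) (hA : ∀ j, MeasurableSet (A j))
    (hsep : DynSep T Y A) (hcover : Y ∪ ⋃ j, A j = univ) (hdisj : ∀ j, Disjoint Y (A j))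
    (i : Fin d) {n : ℕ} (hn : 0 < n) :
    μ (Yray T Y n ∩ A i) = ∑' j, μ (Bray T Y (A i) (n + 1 + j)) := by
  have hlim : Tendsto (fun n => μ (Yray T Y n ∩ A i)) atTop (𝓝 0) :=
    tendsto_of_tendsto_of_tendsto_of_le_of_le tendsto_const_nhds
      (tendsto_measure_yray_atTop_zero hc hT hY hYfin) (fun _ => zero_le)
      fun _ => measure_mono inter_subset_left
  simpa only [add_right_comm] using ENNReal.eq_tsum_of_eq_add_of_tendsto_zero
    (b := fun k => μ (Bray T Y (A i) (k + 1)))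
    (fun k hk => measure_yray_inter_eq_bray_add hT hY hA hsep hcover hdisj i hk) hlim hn

end RayMeasures

lemma wrate_succ_sub_wrate {X : Type*} [MeasurableSpace X] {μ : Measure X} {T : X → X}
    {Y B : Set X} {n : ℕ} (hn : wrate μ T Y B n ≠ ∞) :
    wrate μ T Y B (n + 1) - wrate μ T Y B n = μ (Yray T Y n ∩ B) := by
  rw [wrate, Finset.sum_range_succ, ← wrate, ENNReal.add_sub_cancel_left hn]

lemma ofReal_qlap_eq_tsum {X : Type*} [MeasurableSpace X] {μ : Measure X} {T : X → X}
    {Y B : Set X} {C : ℝ≥0∞} (hC : C ≠ ∞) (hbound : ∀ n, μ (Yray T Y n ∩ B) ≤ C) {s : ℝ}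
    (hs : 0 < s) :
    ENNReal.ofReal (Qlap μ T Y B s)
      = ∑' n : ℕ, ENNReal.ofReal (Real.exp (-(n : ℝ) * s)) * μ (Yray T Y n ∩ B) := by
  have hnonneg : ∀ n : ℕ, 0 ≤ Real.exp (-(n : ℝ) * s) * (μ (Yray T Y n ∩ B)).toReal :=
    fun n => by positivity
  have hsummable :
      Summable fun n : ℕ => Real.exp (-(n : ℝ) * s) * (μ (Yray T Y n ∩ B)).toReal := by
    refine .of_nonneg_of_le hnonneg (fun n => ?_) ((summable_geometric_of_lt_one
      (Real.exp_nonneg (-s)) (Real.exp_lt_one_iff.2 (neg_lt_zero.2 hs))).mul_right C.toReal)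
    rw [← Real.exp_nat_mul, mul_neg, ← neg_mul]
    gcongr
    exact hbound n
  rw [Qlap, ENNReal.ofReal_tsum_of_nonneg hnonneg hsummable]
  refine tsum_congr fun n => ?_
  rw [ENNReal.ofReal_mul (Real.exp_pos _).le,
    ENNReal.ofReal_toReal (ne_top_of_le_ne_top hC (hbound n))]

/-- `μ(Yₙ ∩ Aᵢ) = ∑_{k>n} μ(B_{i,k})`, equivalently
`wᵢ(n+1) − wᵢ(n) = ∑_{k>n} μ(B_{i,k})`, and the resulting formula for `Qᵢ`. -/
theorem stmt10
    {X : Type*} [MeasurableSpace X] (μ : Measure X) (T : X → X)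
    {d : ℕ} (Y : Set X) (A : Fin d → Set X)
    (hR : RaySetting μ T Y A) :
    ∀ i, (∀ n, 1 ≤ n →
        μ (Yray T Y n ∩ A i) = (∑' j : ℕ, μ (Bray T Y (A i) (n + 1 + j))) ∧
        wrate μ T Y (A i) (n + 1) - wrate μ T Y (A i) n
          = ∑' j : ℕ, μ (Bray T Y (A i) (n + 1 + j))) ∧
      ∀ s > (0 : ℝ),
        ENNReal.ofReal (Qlap μ T Y (A i) s)
          = ∑' n : ℕ, ENNReal.ofReal (Real.exp (-((n : ℝ) + 1) * s)) *
              ∑' j : ℕ, μ (Bray T Y (A i) (n + 2 + j)) := by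
  intro i
  have hT : MeasurePreserving T μ μ := hR.ergodic.toMeasurePreserving
  have hbound (n : ℕ) : μ (Yray T Y n ∩ A i) ≤ μ Y :=
    (measure_mono inter_subset_left).trans (hT.measure_yray_le hR.measY n)
  have hray (n : ℕ) (hn : 0 < n) := measure_yray_inter_eq_tsum_bray hR.conservative hT hR.measY
    hR.finY.ne hR.measA hR.sep hR.cover hR.disjYA i hn
  refine ⟨fun n hn => ⟨hray n hn, ?_⟩, fun s hs => ?_⟩
  · rw [wrate_succ_sub_wrate, hray n hn]
    exact ENNReal.sum_ne_top.2 fun k _ => ne_top_of_le_ne_top hR.finY.ne (hbound k)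
  · rw [ofReal_qlap_eq_tsum hR.finY.ne hbound hs, tsum_eq_zero_add' ENNReal.summable, yray_zero,
      (hR.disjYA i).inter_eq, measure_empty, mul_zero, zero_add]
    refine tsum_congr fun n => ?_
    rw [hray (n + 1) n.succ_pos]
    push_cast
    rfl
end
end

section
/- Suppose Assumption (R) holds and fix λ ∈ [0,∞)^d. Then for every probability measure ν ≪ μ and every ε > 0, ν{x ∈ X : sup_{t>0} |S̃_{λ,n,t}(Tx) − S̃_{λ,n,t}(x)| > ε} → 0 as n → ∞. -/
open MeasureTheory Filter Topology Set
open scoped ENNReal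

noncomputable section

/-! If some `λ i > 0`, then, `μ(A i)` being positive, conservativity and ergodicity make
almost every orbit visit `A i` infinitely often, so `λ · S_n → ∞` `μ`-a.e., hence `ν`-a.e.
On the other hand `λ · S_n ∘ T` and `λ · S_n` differ by at most `L = ∑ λ i`, and
`|e^{-b/t} - e^{-a/t}| ≤ |b - a| / min a b` uniformly in `t > 0` (because `u e^{-u} ≤ 1`),
so the supremum over `t` is at most `L / (λ · S_n(x) - L)`, which is `< ε` as soon as
`λ · S_n(x) > L + L / ε`. -/

namespace MeasureTheory.Conservative

variable {α : Type*} [MeasurableSpace α] {μ : Measure α} {f : α → α} {s : Set α}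

theorem ae_frequently_mem_of_preErgodic (hf : Conservative f μ) (he : PreErgodic f μ)
    (hs : MeasurableSet s) (h0 : μ s ≠ 0) :
    ∀ᵐ x ∂μ, ∃ᶠ n in atTop, f^[n] x ∈ s := by
  set E := {x | ∃ᶠ n in atTop, f^[n] x ∈ s}
  have hE : MeasurableSet E := by
    have : E = limsup (fun n => f^[n] ⁻¹' s) atTop := by
      ext x; simp [E, mem_limsup_iff_frequently_mem]
    rw [this]
    exact MeasurableSet.measurableSet_limsup fun n => hf.measurable.iterate n hs
  have hinv : f ⁻¹' E = E := by
    ext x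
    simp only [E, mem_preimage, mem_ofPred_eq, ← Function.iterate_succ_apply]
    exact (frequently_map (m := (· + 1)) (P := fun n => f^[n] x ∈ s)).symm.trans
      (by rw [map_add_atTop_eq_nat])
  rcases he.ae_empty_or_univ hE hinv with hempty | huniv
  · exact absurd (measure_mono_null_ae
      (hf.ae_mem_imp_frequently_image_mem hs.nullMeasurableSet) (ae_eq_empty.mp hempty)) h0
  · exact eventuallyEq_univ.mp huniv

end MeasureTheory.Conservative

theorem Real.abs_exp_neg_div_sub_exp_neg_div_le {a b t : ℝ} (ha : 0 < a) (hab : a ≤ b)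
    (ht : 0 < t) : |Real.exp (-b / t) - Real.exp (-a / t)| ≤ (b - a) / a := by
  have hmono : Real.exp (-b / t) ≤ Real.exp (-a / t) := by gcongr
  have hsplit : Real.exp (-b / t) = Real.exp (-a / t) * Real.exp (-((b - a) / t)) := by
    rw [← Real.exp_add]; ring_nf
  have hpeak : a / t * Real.exp (-a / t) ≤ 1 := by
    calc a / t * Real.exp (-a / t) ≤ Real.exp (a / t) * Real.exp (-a / t) := by
          gcongr; linarith [Real.add_one_le_exp (a / t)]
      _ = 1 := by rw [← Real.exp_add]; ring_nf; exact Real.exp_zero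
  rw [abs_of_nonpos (by linarith), neg_sub, hsplit]
  calc Real.exp (-a / t) - Real.exp (-a / t) * Real.exp (-((b - a) / t))
      = Real.exp (-a / t) * (1 - Real.exp (-((b - a) / t))) := by ring
    _ ≤ Real.exp (-a / t) * ((b - a) / t) := by
        gcongr; linarith [Real.add_one_le_exp (-((b - a) / t))]
    _ = (b - a) / a * (a / t * Real.exp (-a / t)) := by field_simp
    _ ≤ (b - a) / a := mul_le_of_le_one_right (div_nonneg (by linarith) ha.le) hpeak

theorem Real.abs_exp_neg_div_sub_exp_neg_div_le_of_le {a b c t : ℝ} (hc : 0 < c) (hca : c ≤ a)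
    (hcb : c ≤ b) (ht : 0 < t) : |Real.exp (-b / t) - Real.exp (-a / t)| ≤ |b - a| / c := by
  rcases le_total a b with hab | hba
  · calc _ ≤ (b - a) / a := abs_exp_neg_div_sub_exp_neg_div_le (hc.trans_le hca) hab ht
      _ ≤ |b - a| / c := by gcongr; exact le_abs_self _
  · calc _ = |Real.exp (-a / t) - Real.exp (-b / t)| := abs_sub_comm _ _
      _ ≤ (a - b) / b := abs_exp_neg_div_sub_exp_neg_div_le (hc.trans_le hcb) hba ht
      _ ≤ |b - a| / c := by rw [abs_sub_comm]; gcongr; exact le_abs_self _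

section Occupation

variable {X : Type*} {T : X → X} {ι : Type*} {A : ι → Set X}

theorem occVec_nonneg (n : ℕ) (x : X) (i : ι) : 0 ≤ occVec T A n x i :=
  Finset.sum_nonneg fun _ _ => indicator_nonneg (fun _ _ => zero_le_one) _

theorem occVec_succ (n : ℕ) (x : X) (i : ι) :
    occVec T A (n + 1) x i =
      occVec T A n x i + (A i).indicator (fun _ => (1 : ℝ)) (T^[n + 1] x) :=
  Finset.sum_range_succ _ _

theorem occVec_comp_add (n : ℕ) (x : X) (i : ι) :
    occVec T A n (T x) i + (A i).indicator (fun _ => (1 : ℝ)) (T x) = occVec T A (n + 1) x i := by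
  simp only [occVec, Finset.sum_range_succ' _ n, ← Function.iterate_succ_apply]
  rfl

theorem abs_occVec_comp_sub_le_one (n : ℕ) (x : X) (i : ι) :
    |occVec T A n (T x) i - occVec T A n x i| ≤ 1 := by
  have h := occVec_comp_add (T := T) (A := A) n x i
  rw [occVec_succ] at h
  have h01 : ∀ y, 0 ≤ (A i).indicator (fun _ => (1 : ℝ)) y ∧
      (A i).indicator (fun _ => (1 : ℝ)) y ≤ 1 := fun y => by
    by_cases hy : y ∈ A i <;> simp [hy]
  obtain ⟨h1, h2⟩ := h01 (T x)
  obtain ⟨h3, h4⟩ := h01 (T^[n + 1] x)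
  exact abs_le.mpr ⟨by linarith, by linarith⟩

theorem monotone_occVec (x : X) (i : ι) : Monotone fun n => occVec T A n x i :=
  monotone_nat_of_le_succ fun n => by
    rw [occVec_succ]; exact le_add_of_nonneg_right (indicator_nonneg (fun _ _ => zero_le_one) _)

theorem tendsto_occVec_atTop {x : X} {i : ι} (h : ∃ᶠ n in atTop, T^[n] x ∈ A i) :
    Tendsto (fun n => occVec T A n x i) atTop atTop := by
  refine tendsto_atTop_atTop_of_monotone (monotone_occVec x i) fun b => ?_
  suffices ∀ m : ℕ, ∃ n, (m : ℝ) ≤ occVec T A n x i from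
    (this ⌈b⌉₊).imp fun n hn => (Nat.le_ceil b).trans hn
  intro m
  induction m with
  | zero => exact ⟨0, by simpa using occVec_nonneg 0 x i⟩
  | succ m ih =>
    obtain ⟨n, hn⟩ := ih
    obtain ⟨k, hk, hvisit⟩ := (frequently_atTop.mp h) (n + 1)
    obtain ⟨k, rfl⟩ : ∃ k', k = k' + 1 := ⟨k - 1, by omega⟩
    refine ⟨k + 1, ?_⟩
    rw [occVec_succ, indicator_of_mem hvisit]
    push_cast
    linarith [monotone_occVec (T := T) (A := A) x i (show n ≤ k by omega)]

end Occupation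

section WeightedOccupation

variable {X : Type*} {T : X → X} {ι : Type*} [Fintype ι] {A : ι → Set X} {lam : ι → ℝ}

def weightedOcc (T : X → X) (A : ι → Set X) (lam : ι → ℝ) (n : ℕ) (x : X) : ℝ :=
  ∑ i, lam i * occVec T A n x i

theorem Stilde_eq_exp_weightedOcc (n : ℕ) (t : ℝ) (x : X) :
    Stilde T A lam n t x = Real.exp (-weightedOcc T A lam n x / t) :=
  rfl

theorem abs_weightedOcc_comp_sub_le (hlam : ∀ i, 0 ≤ lam i) (n : ℕ) (x : X) :
    |weightedOcc T A lam n (T x) - weightedOcc T A lam n x| ≤ ∑ i, lam i := by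
  rw [weightedOcc, weightedOcc, ← Finset.sum_sub_distrib]
  refine (Finset.abs_sum_le_sum_abs _ _).trans (Finset.sum_le_sum fun i _ => ?_)
  rw [← mul_sub, abs_mul, abs_of_nonneg (hlam i)]
  exact mul_le_of_le_one_right (hlam i) (abs_occVec_comp_sub_le_one n x i)

theorem tendsto_weightedOcc_atTop (hlam : ∀ i, 0 ≤ lam i) {i : ι} (hi : 0 < lam i) {x : X}
    (h : ∃ᶠ n in atTop, T^[n] x ∈ A i) :
    Tendsto (fun n => weightedOcc T A lam n x) atTop atTop :=
  tendsto_atTop_mono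
    (fun n => Finset.single_le_sum (f := fun j => lam j * occVec T A n x j)
      (fun j _ => mul_nonneg (hlam j) (occVec_nonneg n x j)) (Finset.mem_univ i))
    ((tendsto_occVec_atTop h).const_mul_atTop hi)

theorem measurable_weightedOcc [MeasurableSpace X] (hT : Measurable T)
    (hA : ∀ i, MeasurableSet (A i)) (n : ℕ) : Measurable (weightedOcc T A lam n) :=
  Finset.measurable_sum _ fun i _ => (Finset.measurable_sum _ fun k _ =>
    (measurable_const.indicator (hA i)).comp (hT.iterate (k + 1))).const_mul (lam i)

theorem iSup_abs_Stilde_comp_sub_le (hlam : ∀ i, 0 ≤ lam i) {n : ℕ} {x : X}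
    (hx : ∑ i, lam i < weightedOcc T A lam n x) :
    ⨆ t : Ioi (0 : ℝ), |Stilde T A lam n t (T x) - Stilde T A lam n t x| ≤
      (∑ i, lam i) / (weightedOcc T A lam n x - ∑ i, lam i) := by
  have hdiff := abs_weightedOcc_comp_sub_le (T := T) (A := A) hlam n x
  have hpos : 0 < weightedOcc T A lam n x - ∑ i, lam i := sub_pos.mpr hx
  have hL : 0 ≤ ∑ i, lam i := Finset.sum_nonneg fun i _ => hlam i
  have : Nonempty (Ioi (0 : ℝ)) := nonempty_Ioi.to_subtype
  refine ciSup_le fun t => ?_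
  simp only [Stilde_eq_exp_weightedOcc]
  refine (Real.abs_exp_neg_div_sub_exp_neg_div_le_of_le hpos (by linarith)
    (by linarith [(abs_le.mp hdiff).1]) t.2).trans ?_
  gcongr

end WeightedOccupation

theorem MeasureTheory.tendsto_measure_setOf_le_of_ae_tendsto_atTop {α : Type*}
    [MeasurableSpace α] {ν : Measure α} [IsFiniteMeasure ν] {ι : Type*} {l : Filter ι}
    [l.IsCountablyGenerated] {f : ι → α → ℝ} (hf : ∀ i, Measurable (f i))
    (h : ∀ᵐ x ∂ν, Tendsto (fun i => f i x) l atTop) (M : ℝ) :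
    Tendsto (fun i => ν {x | f i x ≤ M}) l (𝓝 0) := by
  simpa using tendsto_measure_of_ae_tendsto_indicator_of_isFiniteMeasure l
    MeasurableSet.empty (fun i => measurableSet_le (hf i) measurable_const)
    (h.mono fun x hx => (hx.eventually_gt_atTop M).mono fun i hi => by simp [hi])

/-- the asymptotic `T`-invariance of `S̃_{λ,n,t}`, uniformly in
`t > 0`, in measure. -/
theorem stmt18
    {X : Type*} [MeasurableSpace X] (μ : Measure X) (T : X → X)
    {d : ℕ} (Y : Set X) (A : Fin d → Set X)
    (hR : RaySetting μ T Y A)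
    (lam : Fin d → ℝ) (hlam : ∀ i, 0 ≤ lam i) :
    ∀ ν : Measure X, IsProbabilityMeasure ν → ν ≪ μ → ∀ ε > (0 : ℝ),
      Tendsto (fun n =>
          ν {x | ε < ⨆ t : Ioi (0 : ℝ),
            |Stilde T A lam n (t : ℝ) (T x) - Stilde T A lam n (t : ℝ) x|})
        atTop (𝓝 0) := by
  intro ν _ hνμ ε hε
  by_cases hzero : ∀ i, lam i = 0
  · simp [Stilde, hzero, hε.not_gt]
  obtain ⟨i, hi⟩ : ∃ i, 0 < lam i := by
    push Not at hzero
    exact hzero.imp fun i hi => (hlam i).lt_of_ne' hi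
  set L := ∑ i, lam i
  have hL : 0 < L := hi.trans_le (Finset.single_le_sum (fun j _ => hlam j) (Finset.mem_univ i))
  have hvisit : ∀ᵐ x ∂μ, ∃ᶠ n in atTop, T^[n] x ∈ A i :=
    hR.conservative.ae_frequently_mem_of_preErgodic hR.ergodic.toPreErgodic (hR.measA i)
      (by simp [hR.infA i])
  have hgrow : ∀ᵐ x ∂ν, Tendsto (fun n => weightedOcc T A lam n x) atTop atTop :=
    hνμ.ae_le (hvisit.mono fun x => tendsto_weightedOcc_atTop hlam hi)
  refine tendsto_of_tendsto_of_tendsto_of_le_of_le tendsto_const_nhds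
    (tendsto_measure_setOf_le_of_ae_tendsto_atTop
      (measurable_weightedOcc hR.conservative.measurable hR.measA) hgrow (L + L / ε))
    (fun _ => bot_le) fun n => measure_mono fun x hx => ?_
  by_contra hlarge
  rw [mem_ofPred_eq, not_le] at hlarge
  have hgap : L / ε < weightedOcc T A lam n x - L := by linarith
  have hbound := iSup_abs_Stilde_comp_sub_le (T := T) (A := A) hlam (n := n) (x := x)
    (by linarith [div_pos hL hε])
  exact hx.not_ge (hbound.trans ((div_lt_comm₀ (hgap.trans' (div_pos hL hε)) hε).mpr hgap).le)

end
end
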